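/- arXiv:1806.02375 — 2 statements merged into one kernel-verified Lean document; each statement's English description precedes it below -/
import Mathlib

section
/- The map φ ↦ x(φ) = (sin((M+1)φ))^{M+1} / (sin(φ)·(sin(Mφ))^M) is strictly decreasing (hence injective) on the open interval (0, π/(M+1)), for every positive integer M. -/
/-!
Split `x(φ)` as `(sin((M+1)φ) / sin(Mφ))^M · (sin((M+1)φ) / sin φ)`, a product of positive
factors of the form `sin(qφ) / sin(pφ)` with `0 < p < q`. Each such ratio decreases on
`(0, π/q)`: the numerator of its derivative is, by the addition formulas, half of
`(q-p) sin((q+p)φ) - (q+p) sin((q-p)φ)`, which is negative because `sin t / t` decreases on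
`(0, π]` (concavity of `sin`).
-/

open Real Set

theorem sin_div_self_strictAntiOn : StrictAntiOn (fun x => sin x / x) (Ioc 0 π) := by
  intro x hx y hy hxy
  simpa using strictConcaveOn_sin_Icc.secant_strict_mono (a := 0) ⟨le_rfl, pi_pos.le⟩
    (Ioc_subset_Icc_self hx) (Ioc_subset_Icc_self hy) hx.1.ne' hy.1.ne' hxy

theorem mul_sin_lt_mul_sin {a b : ℝ} (ha : 0 < a) (hab : a < b) (haπ : a < π)
    (hb : b < 2 * π) : a * sin b < b * sin a := by
  have hb₀ : 0 < b := ha.trans hab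
  rcases le_or_gt b π with hbπ | hπb
  · have h := sin_div_self_strictAntiOn ⟨ha, haπ.le⟩ ⟨hb₀, hbπ⟩ hab
    rw [div_lt_div_iff₀ hb₀ ha] at h
    linarith
  · have hsinb : sin b < 0 := by
      rw [← sin_sub_two_pi]
      exact sin_neg_of_neg_of_neg_pi_lt (by linarith) (by linarith)
    nlinarith [sin_pos_of_pos_of_lt_pi ha haπ]

theorem mul_cos_mul_sin_lt_mul_sin_mul_cos {p q φ : ℝ} (hp : 0 < p) (hpq : p < q)
    (hφ : 0 < φ) (hqφ : q * φ < π) :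
    q * cos (q * φ) * sin (p * φ) < p * sin (q * φ) * cos (p * φ) := by
  have key := mul_sin_lt_mul_sin (a := (q - p) * φ) (b := (q + p) * φ)
    (mul_pos (sub_pos.2 hpq) hφ) (by nlinarith) (by nlinarith) (by nlinarith)
  rw [show (q + p) * φ = q * φ + p * φ by ring, show (q - p) * φ = q * φ - p * φ by ring,
    sin_add, sin_sub] at key
  exact lt_of_mul_lt_mul_left (by linear_combination key / 2) hφ.le

theorem sin_mul_pos_of_mem_Ioo {r q φ : ℝ} (hr : 0 < r) (hrq : r ≤ q)
    (hφ : φ ∈ Ioo 0 (π / q)) : 0 < sin (r * φ) := by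
  have hqφ : q * φ < π := (lt_div_iff₀' (hr.trans_le hrq)).1 hφ.2
  exact sin_pos_of_pos_of_lt_pi (mul_pos hr hφ.1) (by nlinarith [hφ.1])

theorem sin_mul_div_sin_mul_strictAntiOn {p q : ℝ} (hp : 0 < p) (hpq : p < q) :
    StrictAntiOn (fun φ => sin (q * φ) / sin (p * φ)) (Ioo 0 (π / q)) := by
  have hq : 0 < q := hp.trans hpq
  have hsin : ∀ φ ∈ Ioo 0 (π / q), 0 < sin (p * φ) := fun φ =>
    sin_mul_pos_of_mem_Ioo hp hpq.le
  have hderiv : ∀ φ ∈ Ioo 0 (π / q), HasDerivAt (fun φ => sin (q * φ) / sin (p * φ))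
      ((q * cos (q * φ) * sin (p * φ) - p * sin (q * φ) * cos (p * φ)) / sin (p * φ) ^ 2) φ :=
    fun φ hφ => by
      refine ((((hasDerivAt_id' φ).const_mul q).sin).div
        (((hasDerivAt_id' φ).const_mul p).sin) (hsin φ hφ).ne').congr_deriv ?_
      ring
  refine strictAntiOn_of_deriv_neg (convex_Ioo _ _)
    (fun φ hφ => (hderiv φ hφ).continuousAt.continuousWithinAt) fun φ hφ => ?_
  rw [interior_Ioo] at hφ
  rw [(hderiv φ hφ).deriv]
  have hqφ : q * φ < π := (lt_div_iff₀' hq).1 hφ.2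
  exact div_neg_of_neg_of_pos (sub_neg.2 (mul_cos_mul_sin_lt_mul_sin_mul_cos hp hpq hφ.1 hqφ))
    (pow_pos (hsin φ hφ) 2)

theorem AntitoneOn.mul_strictAntiOn {α M₀ : Type*} [Preorder α] [MulZeroClass M₀] [Preorder M₀]
    [PosMulStrictMono M₀] [MulPosMono M₀] {f g : α → M₀} {s : Set α} (hf : AntitoneOn f s)
    (hg : StrictAntiOn g s) (hf₀ : ∀ x ∈ s, 0 < f x) (hg₀ : ∀ x ∈ s, 0 ≤ g x) :
    StrictAntiOn (fun x => f x * g x) s := fun _ ha _ hb h =>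
  mul_lt_mul' (hf ha hb h.le) (hg ha hb h) (hg₀ _ hb) (hf₀ _ ha)

/-- The parametrization `φ ↦ x(φ) = sin((M+1)φ)^(M+1) / (sin φ · sin(Mφ)^M)` is
strictly decreasing (hence injective) on `(0, π/(M+1))`, for every positive integer `M`. -/
theorem x_param_strictAnti (M : ℕ) (hM : 0 < M) :
    StrictAntiOn
      (fun φ : ℝ =>
        (Real.sin (((M : ℝ) + 1) * φ)) ^ (M + 1) /
          (Real.sin φ * (Real.sin ((M : ℝ) * φ)) ^ M))
      (Set.Ioo 0 (Real.pi / ((M : ℝ) + 1))) := by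
  have hM₁ : (1 : ℝ) ≤ M := Nat.one_le_cast.2 hM
  have hratio_pos {p : ℝ} (hp : 0 < p) (hpM : p ≤ M + 1) :
      ∀ φ ∈ Ioo 0 (π / (M + 1)), 0 < sin ((M + 1) * φ) / sin (p * φ) := fun φ hφ =>
    div_pos (sin_mul_pos_of_mem_Ioo (by positivity) le_rfl hφ) (sin_mul_pos_of_mem_Ioo hp hpM hφ)
  have hfirst := sin_mul_div_sin_mul_strictAntiOn (p := (M : ℝ)) (by positivity) (lt_add_one _)
  have hsecond := sin_mul_div_sin_mul_strictAntiOn (p := 1) (q := (M : ℝ) + 1) one_pos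
    (by linarith)
  have hfirst_pow : AntitoneOn (fun φ => (sin ((M + 1) * φ) / sin (M * φ)) ^ M)
      (Ioo 0 (π / (M + 1))) := fun a ha b hb hab =>
    pow_le_pow_left₀ (hratio_pos (by positivity) (by linarith) b hb).le
      (hfirst.antitoneOn ha hb hab) M
  refine (hfirst_pow.mul_strictAntiOn hsecond
    (fun φ hφ => pow_pos (hratio_pos (by positivity) (by linarith) φ hφ) M)
    (fun φ hφ => (hratio_pos one_pos (by linarith) φ hφ).le)).congr fun φ hφ => ?_
  have hsinM := sin_mul_pos_of_mem_Ioo (by positivity) (by linarith) hφ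
  have hsin1 := sin_mul_pos_of_mem_Ioo one_pos (by linarith) hφ
  simp only [one_mul] at hsin1 ⊢
  rw [div_pow]
  field_simp
  ring
end

section
/- Near the origin, the limiting density ρ_M(x) behaves like a constant times x^{−M/(M+1)}: precisely, using the parametrization x(φ), as φ → (π/(M+1))⁻ (so x → 0⁺) one has ρ_M(x)·x^{M/(M+1)} converges to a finite positive constant depending only on M. -/
open Real Filter Topology

/-! At `a = π/(M+1)` one has `sin (M a) = sin (π - a) = sin a`, and on `(0, a)` all of
`sin φ`, `sin (M φ)`, `sin ((M+1) φ)` are positive. There the vanishing factor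
`sin ((M+1) φ)` cancels exactly from `ρ · x^{M/(M+1)}`, leaving
`sin φ · (sin φ · sin (M φ)^M)^{1/(M+1)} / (π sin (M φ))`, which is continuous at `a`
with value `sin (π/(M+1)) / π > 0`. -/

lemma pow_succ_rpow_one_div {n : ℕ} {s : ℝ} (hs : 0 ≤ s) :
    (s ^ (n + 1)) ^ (1 / ((n : ℝ) + 1)) = s := by
  have := pow_rpow_inv_natCast hs n.succ_ne_zero
  push_cast at this
  rwa [one_div]

lemma rpow_div_succ_eq_div {n : ℕ} {x : ℝ} (hx : 0 < x) :
    x ^ ((n : ℝ) / (n + 1)) = x / x ^ (1 / ((n : ℝ) + 1)) := by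
  have hexp : (n : ℝ) / (n + 1) = 1 - 1 / ((n : ℝ) + 1) := by field_simp; ring
  rw [hexp, rpow_sub hx, rpow_one]

lemma one_div_mul_mul_rpow_div_succ (n : ℕ) (c : ℝ) {s p q : ℝ} (hs : 0 < s) (hp : 0 < p)
    (hq : 0 < q) :
    1 / (c * (s ^ (n + 1) / (p * q ^ n))) * (s / q) * p *
        (s ^ (n + 1) / (p * q ^ n)) ^ ((n : ℝ) / (n + 1)) =
      p * (p * q ^ n) ^ (1 / ((n : ℝ) + 1)) / (c * q) := by
  have hD : 0 < p * q ^ n := by positivity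
  rw [rpow_div_succ_eq_div (by positivity), div_rpow (by positivity) hD.le,
    pow_succ_rpow_one_div hs.le]
  have hE : 0 < (p * q ^ n) ^ (1 / ((n : ℝ) + 1)) := rpow_pos_of_pos hD _
  field_simp

lemma sin_natCast_mul_pi_div_succ (M : ℕ) :
    sin (M * (π / (M + 1))) = sin (π / (M + 1)) := by
  rw [← sin_pi_sub]
  congr 1
  field_simp
  ring

lemma sin_mul_pos_of_mem_Ioo_s7 {k L φ : ℝ} (hk : 0 < k) (hkL : k ≤ L) (hφ : φ ∈ Set.Ioo 0 (π / L)) :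
    0 < sin (k * φ) := by
  obtain ⟨hφ0, hφL⟩ := hφ
  have hL : 0 < L := hk.trans_le hkL
  refine sin_pos_of_pos_of_lt_pi (by positivity) ?_
  calc k * φ ≤ L * φ := by gcongr
    _ < π := by rwa [lt_div_iff₀ hL, mul_comm] at hφL

noncomputable def blowupProfile (M : ℕ) (φ : ℝ) : ℝ :=
  sin φ * (sin φ * sin (M * φ) ^ M) ^ (1 / ((M : ℝ) + 1)) / (π * sin (M * φ))

section

variable {M : ℕ}

lemma sin_pi_div_succ_pos (hM : 0 < M) : 0 < sin (π / (M + 1)) := by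
  have hM1 : (1 : ℝ) < M + 1 := by norm_cast; omega
  exact sin_pos_of_pos_of_lt_pi (by positivity) (div_lt_self pi_pos hM1)

lemma blowupProfile_pi_div_succ (hM : 0 < M) :
    blowupProfile M (π / (M + 1)) = sin (π / (M + 1)) / π := by
  have hsin := sin_pi_div_succ_pos hM
  rw [blowupProfile, sin_natCast_mul_pi_div_succ, ← pow_succ', pow_succ_rpow_one_div hsin.le]
  field_simp

lemma continuousAt_blowupProfile (hM : 0 < M) : ContinuousAt (blowupProfile M) (π / (M + 1)) := by
  have hsin := sin_pi_div_succ_pos hM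
  have hMa := sin_natCast_mul_pi_div_succ M
  refine ContinuousAt.div (ContinuousAt.mul (by fun_prop) ?_) (by fun_prop) ?_
  · exact ContinuousAt.rpow_const (by fun_prop) (Or.inl (by rw [hMa]; positivity))
  · rw [hMa]; positivity

end

/-- Near the origin the density blows up like `x^{-M/(M+1)}`: with
`x(φ) = sin((M+1)φ)^(M+1) / (sin φ · sin(Mφ)^M)` and
`ρ(φ) = (1/(π x(φ))) · (sin((M+1)φ)/sin(Mφ)) · sin φ`, as `φ → (π/(M+1))⁻`
(so `x → 0⁺`) the product `ρ(φ) · x(φ)^{M/(M+1)}` converges to a finite positive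
constant depending only on `M`. -/
theorem density_blowup_rate (M : ℕ) (hM : 0 < M) :
    ∃ c : ℝ, 0 < c ∧
      Tendsto
        (fun φ : ℝ =>
          (let x := (Real.sin (((M : ℝ) + 1) * φ)) ^ (M + 1) /
              (Real.sin φ * (Real.sin ((M : ℝ) * φ)) ^ M);
           (1 / (Real.pi * x)) *
              (Real.sin (((M : ℝ) + 1) * φ) / Real.sin ((M : ℝ) * φ)) * Real.sin φ *
            x ^ ((M : ℝ) / ((M : ℝ) + 1))))
        (nhdsWithin (Real.pi / ((M : ℝ) + 1)) (Set.Iio (Real.pi / ((M : ℝ) + 1))))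
        (nhds c) := by
  refine ⟨sin (π / (M + 1)) / π, div_pos (sin_pi_div_succ_pos hM) pi_pos, ?_⟩
  rw [← blowupProfile_pi_div_succ hM]
  refine (continuousAt_blowupProfile hM).continuousWithinAt.tendsto.congr' ?_
  have hM1 : (M : ℝ) ≤ M + 1 := by linarith
  filter_upwards [Ioo_mem_nhdsLT (div_pos pi_pos (by positivity : (0 : ℝ) < M + 1))]
    with φ hφ
  have hp : 0 < sin φ := by simpa using sin_mul_pos_of_mem_Ioo_s7 one_pos (by linarith) hφ
  exact (one_div_mul_mul_rpow_div_succ M π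
    (sin_mul_pos_of_mem_Ioo_s7 (by positivity) le_rfl hφ) hp
    (sin_mul_pos_of_mem_Ioo_s7 (by exact_mod_cast hM) hM1 hφ)).symm
end
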